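/- Let F be a finite field, Γ a subgroup of the multiplicative group F^*, viewed also as a subset of F, and let ψ : F → ℝ be a Γ-invariant positive definite function. Then for every function u : F → ℂ whose support is contained in Γ, one has ∑_{a,b∈F} ψ(b−a)·u(a)·conj(u(b)) ≥ |Γ|^{-2} · (∑_{x∈F} ψ(x)·|Γ ∩ (Γ−x)|) · |∑_{x∈Γ} u(x)|^2 (both sides being real). -/

import Mathlib

open scoped BigOperators Pointwise ComplexOrder

/-- The image in `F` of a subgroup of `Fˣ`. -/
def unitsSubgroupSet (F : Type*) [Field F] (Γ : Subgroup Fˣ) : Set F :=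
  (fun u : Fˣ => (u : F)) '' (Γ : Set Fˣ)

/-- A function `ψ : F → ℝ` on a finite field is positive definite if
`∑_{x,y} ψ(x-y) u(x) conj(u(y)) ≥ 0` (as a real number) for every `u : F → ℂ`. -/
def IsPosDef {F : Type*} [Field F] [Fintype F] (ψ : F → ℝ) : Prop :=
  ∀ u : F → ℂ, (0 : ℂ) ≤ ∑ x : F, ∑ y : F, (ψ (x - y) : ℂ) * u x * (starRingEnd ℂ) (u y)

private lemma aux_cs (Q Uc m C : ℂ) (hm : m ≠ 0) :
    Q - (starRingEnd ℂ) Uc / m * (C * Uc) - Uc / m * (C * (starRingEnd ℂ) Uc)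
      + Uc / m * ((starRingEnd ℂ) Uc / m) * (m * C)
    = Q - C * (Uc * (starRingEnd ℂ) Uc) / m := by
  field_simp
  ring

theorem subgroup_invariant_posdef_lower_bound {F : Type*} [Field F] [Fintype F]
    (Γ : Subgroup Fˣ) (ψ : F → ℝ)
    (hinv : ∀ γ ∈ Γ, ∀ x : F, ψ (((γ : Fˣ) : F) * x) = ψ x)
    (hψ : IsPosDef ψ)
    (u : F → ℂ) (hu : ∀ x : F, u x ≠ 0 → x ∈ unitsSubgroupSet F Γ) :
    ((((unitsSubgroupSet F Γ).ncard : ℝ) ^ 2)⁻¹ *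
        (∑ x : F, ψ x *
          (({g ∈ unitsSubgroupSet F Γ | g + x ∈ unitsSubgroupSet F Γ}).ncard : ℝ)) *
        ‖∑ x : F, Set.indicator (unitsSubgroupSet F Γ) u x‖ ^ 2 : ℂ) ≤
      ∑ a : F, ∑ b : F, (ψ (b - a) : ℂ) * u a * (starRingEnd ℂ) (u b) := by
  classical
  have hSfin : (unitsSubgroupSet F Γ).Finite := Set.toFinite _
  set Sf : Finset F := hSfin.toFinset with hSfdef
  have hmem : ∀ x : F, x ∈ Sf ↔ x ∈ unitsSubgroupSet F Γ := fun x => hSfin.mem_toFinset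
  have h1 : (1 : F) ∈ Sf := (hmem 1).2 ⟨1, Γ.one_mem, rfl⟩
  have hne0 : ∀ a ∈ Sf, a ≠ 0 := by
    intro a ha
    rcases (hmem a).1 ha with ⟨γ, hγ, rfl⟩
    exact γ.ne_zero
  have hψmul : ∀ s ∈ Sf, ∀ x : F, ψ (s * x) = ψ x := by
    intro s hs x
    rcases (hmem s).1 hs with ⟨γ, hγ, rfl⟩
    exact hinv γ hγ x
  have hmulmem : ∀ a ∈ Sf, ∀ b ∈ Sf, a * b ∈ Sf := by
    intro a ha b hb
    rcases (hmem a).1 ha with ⟨γ, hγ, rfl⟩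
    rcases (hmem b).1 hb with ⟨δ, hδ, rfl⟩
    exact (hmem _).2 ⟨γ * δ, Γ.mul_mem hγ hδ, by simp⟩
  have hinvmem : ∀ a ∈ Sf, a⁻¹ ∈ Sf := by
    intro a ha
    rcases (hmem a).1 ha with ⟨γ, hγ, rfl⟩
    exact (hmem _).2 ⟨γ⁻¹, Γ.inv_mem hγ, by simp⟩
  set C : ℝ := ∑ c ∈ Sf, ψ (c - 1) with hC
  -- row sums: for y ∈ Sf, ∑ x ∈ Sf, ψ (x - y) = C
  have hrow : ∀ y ∈ Sf, ∑ x ∈ Sf, ψ (x - y) = C := by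
    intro y hy
    rw [hC]
    refine Finset.sum_nbij' (fun x => x * y⁻¹) (fun c => c * y) ?_ ?_ ?_ ?_ ?_
    · intro a ha; exact hmulmem a ha _ (hinvmem y hy)
    · intro c hc; exact hmulmem c hc y hy
    · intro a _; have := hne0 y hy; field_simp
    · intro c _; have := hne0 y hy; field_simp
    · intro a _
      have hyx : a - y = y * (a * y⁻¹ - 1) := by
        have := hne0 y hy; field_simp
      rw [hyx, hψmul y hy]
  have hcol : ∀ x ∈ Sf, ∑ y ∈ Sf, ψ (x - y) = C := by
    intro x hx
    rw [hC]
    refine Finset.sum_nbij' (fun y => x * y⁻¹) (fun c => x * c⁻¹) ?_ ?_ ?_ ?_ ?_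
    · intro a ha; exact hmulmem x hx _ (hinvmem a ha)
    · intro c hc; exact hmulmem x hx _ (hinvmem c hc)
    · intro a ha
      have := hne0 x hx; have := hne0 a ha
      field_simp
    · intro c hc
      have := hne0 x hx; have := hne0 c hc
      field_simp
    · intro a ha
      have hyx : x - a = a * (x * a⁻¹ - 1) := by
        have := hne0 a ha; field_simp
      rw [hyx, hψmul a ha]
  -- counting identity
  have hT : (∑ x : F, ψ x *
      (({g ∈ unitsSubgroupSet F Γ | g + x ∈ unitsSubgroupSet F Γ}).ncard : ℝ))
      = (Sf.card : ℝ) * C := by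
    have hcount : ∀ x : F,
        ({g ∈ unitsSubgroupSet F Γ | g + x ∈ unitsSubgroupSet F Γ}).ncard
          = (Sf.filter (fun g => g + x ∈ Sf)).card := by
      intro x
      rw [← Set.ncard_coe_finset]
      congr 1
      ext g
      simp [hmem]
    calc (∑ x : F, ψ x *
        (({g ∈ unitsSubgroupSet F Γ | g + x ∈ unitsSubgroupSet F Γ}).ncard : ℝ))
        = ∑ x : F, ∑ g ∈ Sf, (if g + x ∈ Sf then ψ x else 0) := by
          refine Finset.sum_congr rfl fun x _ => ?_
          rw [hcount x, ← Finset.sum_filter, Finset.sum_const, nsmul_eq_mul, mul_comm]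
      _ = ∑ g ∈ Sf, ∑ x : F, (if g + x ∈ Sf then ψ x else 0) := Finset.sum_comm
      _ = ∑ g ∈ Sf, ∑ h ∈ Sf, ψ (h - g) := by
          refine Finset.sum_congr rfl fun g _ => ?_
          calc ∑ x : F, (if g + x ∈ Sf then ψ x else 0)
              = ∑ h : F, (if h ∈ Sf then ψ (h - g) else 0) := by
                refine Fintype.sum_equiv (Equiv.addLeft g) _ _ fun x => ?_
                simp [Equiv.addLeft]
            _ = ∑ h ∈ Sf, ψ (h - g) := by
                rw [Finset.sum_ite_mem, Finset.univ_inter]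
      _ = ∑ g ∈ Sf, C := Finset.sum_congr rfl fun g hg => hrow g hg
      _ = (Sf.card : ℝ) * C := by rw [Finset.sum_const, nsmul_eq_mul]
  -- main part
  have hUind : (∑ x : F, Set.indicator (unitsSubgroupSet F Γ) u x) = ∑ x : F, u x := by
    refine Finset.sum_congr rfl fun x _ => ?_
    by_cases hx : u x = 0
    · simp [Set.indicator_apply, hx]
    · exact Set.indicator_of_mem (hu x hx) u
  have hncard : (unitsSubgroupSet F Γ).ncard = Sf.card := by
    rw [← Set.ncard_coe_finset]
    congr 1
    ext x
    simp [hmem]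
  have hcardpos : 0 < Sf.card := Finset.card_pos.2 ⟨1, h1⟩
  set U : ℂ := ∑ x : F, u x with hU
  set n : ℂ := (Sf.card : ℂ) with hn
  have hn0 : n ≠ 0 := by
    rw [hn]
    exact_mod_cast hcardpos.ne'
  set v : F → ℂ := fun x => if x ∈ Sf then 1 else 0 with hv
  have hvsum : ∀ f : F → ℂ, (∑ x : F, v x * f x) = ∑ x ∈ Sf, f x := by
    intro f
    simp [hv, ite_mul, Finset.sum_ite_mem]
  have hconjv : ∀ x, (starRingEnd ℂ) (v x) = v x := by
    intro x; simp [hv, apply_ite (starRingEnd ℂ)]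
  have hpsiC : ∀ x ∈ Sf, (∑ y : F, v y * (ψ (x - y) : ℂ)) = (C : ℂ) := by
    intro x hx
    rw [hvsum]
    rw [hC]
    push_cast
    exact_mod_cast congrArg (fun r : ℝ => (r : ℂ)) (hcol x hx)
  have hpsiC' : ∀ y ∈ Sf, (∑ x : F, v x * (ψ (x - y) : ℂ)) = (C : ℂ) := by
    intro y hy
    rw [hvsum]
    exact_mod_cast congrArg (fun r : ℝ => (r : ℂ)) (hrow y hy)
  set Qu : ℂ := ∑ x : F, ∑ y : F, (ψ (x - y) : ℂ) * u x * (starRingEnd ℂ) (u y) with hQu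
  have h0 := hψ (fun x => u x - U / n * v x)
  beta_reduce at h0
  have hexp : (∑ x : F, ∑ y : F, (ψ (x - y) : ℂ) * (u x - U / n * v x) *
        (starRingEnd ℂ) (u y - U / n * v y))
      = Qu - (starRingEnd ℂ) (U / n) * (∑ x : F, ∑ y : F, (ψ (x - y) : ℂ) * u x * v y)
          - (U / n) * (∑ x : F, ∑ y : F, (ψ (x - y) : ℂ) * v x * (starRingEnd ℂ) (u y))
          + (U / n) * (starRingEnd ℂ) (U / n) *
              (∑ x : F, ∑ y : F, (ψ (x - y) : ℂ) * v x * v y) := by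
    rw [hQu]
    simp only [Finset.mul_sum, ← Finset.sum_sub_distrib, ← Finset.sum_add_distrib]
    refine Finset.sum_congr rfl fun x _ => Finset.sum_congr rfl fun y _ => ?_
    simp only [map_sub, map_mul, hconjv]
    ring
  have hA1 : (∑ x : F, ∑ y : F, (ψ (x - y) : ℂ) * u x * v y) = (C : ℂ) * U := by
    rw [hU, Finset.mul_sum]
    refine Finset.sum_congr rfl fun x _ => ?_
    by_cases hx : u x = 0
    · simp [hx]
    · have hxS : x ∈ Sf := (hmem x).2 (hu x hx)
      calc ∑ y : F, (ψ (x - y) : ℂ) * u x * v y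
          = u x * ∑ y : F, v y * (ψ (x - y) : ℂ) := by
            rw [Finset.mul_sum]; exact Finset.sum_congr rfl fun y _ => by ring
        _ = u x * (C : ℂ) := by rw [hpsiC x hxS]
        _ = (C : ℂ) * u x := by ring
  have hA2 : (∑ x : F, ∑ y : F, (ψ (x - y) : ℂ) * v x * (starRingEnd ℂ) (u y))
      = (C : ℂ) * (starRingEnd ℂ) U := by
    rw [Finset.sum_comm, hU, map_sum, Finset.mul_sum]
    refine Finset.sum_congr rfl fun y _ => ?_
    by_cases hy : u y = 0
    · simp [hy]
    · have hyS : y ∈ Sf := (hmem y).2 (hu y hy)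
      calc ∑ x : F, (ψ (x - y) : ℂ) * v x * (starRingEnd ℂ) (u y)
          = (starRingEnd ℂ) (u y) * ∑ x : F, v x * (ψ (x - y) : ℂ) := by
            rw [Finset.mul_sum]; exact Finset.sum_congr rfl fun x _ => by ring
        _ = (C : ℂ) * (starRingEnd ℂ) (u y) := by rw [hpsiC' y hyS]; ring
  have hA3 : (∑ x : F, ∑ y : F, (ψ (x - y) : ℂ) * v x * v y) = n * (C : ℂ) := by
    calc ∑ x : F, ∑ y : F, (ψ (x - y) : ℂ) * v x * v y
        = ∑ x : F, v x * ∑ y : F, v y * (ψ (x - y) : ℂ) := by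
          refine Finset.sum_congr rfl fun x _ => ?_
          rw [Finset.mul_sum]; exact Finset.sum_congr rfl fun y _ => by ring
      _ = ∑ x ∈ Sf, ∑ y : F, v y * (ψ (x - y) : ℂ) := hvsum _
      _ = ∑ x ∈ Sf, (C : ℂ) := Finset.sum_congr rfl fun x hx => hpsiC x hx
      _ = n * (C : ℂ) := by rw [Finset.sum_const, nsmul_eq_mul, hn]
  have hUU : U * (starRingEnd ℂ) U = ((‖U‖ ^ 2 : ℝ) : ℂ) := by
    rw [Complex.mul_conj]
    norm_cast
    rw [Complex.normSq_eq_norm_sq]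
  have hmain : (C : ℂ) * ((‖U‖ ^ 2 : ℝ) : ℂ) / n ≤ Qu := by
    rw [hexp, hA1, hA2, hA3] at h0
    have heq : Qu - (starRingEnd ℂ) (U / n) * ((C : ℂ) * U)
        - (U / n) * ((C : ℂ) * (starRingEnd ℂ) U)
        + (U / n) * (starRingEnd ℂ) (U / n) * (n * (C : ℂ))
        = Qu - (C : ℂ) * ((‖U‖ ^ 2 : ℝ) : ℂ) / n := by
      have hconjn : (starRingEnd ℂ) n = n := by rw [hn]; simp
      rw [map_div₀, hconjn, aux_cs Qu U n (C : ℂ) hn0, hUU]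
    rw [heq] at h0
    exact sub_nonneg.1 h0
  have hQreal : (starRingEnd ℂ) Qu = Qu := by
    have h00 := hψ u
    rw [← hQu] at h00
    have him : Qu.im = 0 := by
      have := (Complex.le_def.1 h00).2
      simpa using this.symm
    exact Complex.conj_eq_iff_im.2 him
  have hQgoal : (∑ a : F, ∑ b : F, (ψ (b - a) : ℂ) * u a * (starRingEnd ℂ) (u b)) = Qu := by
    rw [Finset.sum_comm, ← hQreal, hQu, map_sum]
    refine Finset.sum_congr rfl fun b _ => ?_
    rw [map_sum]
    refine Finset.sum_congr rfl fun a _ => ?_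
    simp only [map_mul, Complex.conj_ofReal, Complex.conj_conj]
    ring
  rw [hQgoal]
  have hLr : ((((unitsSubgroupSet F Γ).ncard : ℝ) ^ 2)⁻¹ *
      (∑ x : F, ψ x *
        (({g ∈ unitsSubgroupSet F Γ | g + x ∈ unitsSubgroupSet F Γ}).ncard : ℝ)) *
      ‖∑ x : F, Set.indicator (unitsSubgroupSet F Γ) u x‖ ^ 2 : ℝ)
      = C * ‖U‖ ^ 2 / (Sf.card : ℝ) := by
    rw [hUind, hT, hncard]
    have hcR : ((Sf.card : ℝ)) ≠ 0 := by exact_mod_cast hcardpos.ne'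
    field_simp
  calc ((((unitsSubgroupSet F Γ).ncard : ℝ) ^ 2)⁻¹ *
      (∑ x : F, ψ x *
        (({g ∈ unitsSubgroupSet F Γ | g + x ∈ unitsSubgroupSet F Γ}).ncard : ℝ)) *
      ‖∑ x : F, Set.indicator (unitsSubgroupSet F Γ) u x‖ ^ 2 : ℂ)
      = ((C * ‖U‖ ^ 2 / (Sf.card : ℝ) : ℝ) : ℂ) := by
        rw [← hLr]; push_cast; ring
    _ = (C : ℂ) * ((‖U‖ ^ 2 : ℝ) : ℂ) / n := by rw [hn]; push_cast; ring
    _ ≤ Qu := hmain
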